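/- (Finite-time stabilization of one normalized equation by backstepping.) Let G : [0,1] → ℝ be continuous, F continuous on the triangle 𝒯 = {(σ̄, ȳ) ∈ [0,1]² : 0 ≤ ȳ ≤ σ̄ ≤ 1}, and let k : 𝒯 → ℝ be C¹ and satisfy the kernel equations ∂k/∂σ̄(σ̄,ȳ) + ∂k/∂ȳ(σ̄,ȳ) = ∫_{ȳ}^{σ̄} k(σ̄,ξ) F(ξ,ȳ) dξ − F(σ̄,ȳ) on 𝒯 and k(σ̄,0) = ∫₀^{σ̄} k(σ̄,ȳ) G(ȳ) dȳ − G(σ̄) for σ̄ ∈ [0,1]. Suppose w : [0,1] × [0,∞) → ℝ is continuous, C¹ on (0,1) × (0,∞), satisfies ∂w/∂t = ∂w/∂σ̄ + G(σ̄) w(0,t) + ∫₀^{σ̄} F(σ̄, ȳ) w(ȳ, t) dȳ on (0,1) × (0,∞), and the feedback boundary condition w(1,t) = ∫₀¹ k(1,ȳ) w(ȳ,t) dȳ for all t ≥ 0. Then w(σ̄, t) = 0 for every σ̄ ∈ [0,1] and every t ≥ 1. -/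

import Mathlib

open Set MeasureTheory Filter

lemma ext_cont {X : Type*} [TopologicalSpace X] [NormalSpace X] {s : Set X}
    (hs : IsClosed s) {f : X → ℝ} (hf : ContinuousOn f s) :
    ∃ g : X → ℝ, Continuous g ∧ ∀ p ∈ s, g p = f p := by
  obtain ⟨g, hg⟩ := ContinuousMap.exists_restrict_eq (Y := ℝ) hs ⟨s.restrict f, hf.restrict⟩
  refine ⟨g, g.continuous, fun p hp => ?_⟩
  have := DFunLike.congr_fun hg (⟨p, hp⟩ : s)
  exact this

lemma ftc_right {f g : ℝ → ℝ} {a b : ℝ} (hab : a ≤ b) (hf : ContinuousOn f (Set.Icc a b))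
    (hd : ∀ x ∈ Set.Ioo a b, HasDerivWithinAt f (g x) (Set.Ioi x) x)
    (hg : ContinuousOn g (Set.Icc a b)) :
    f b = f a + ∫ x in a..b, g x := by
  have := intervalIntegral.integral_eq_sub_of_hasDeriv_right_of_le hab hf hd
      ((by rwa [Set.uIcc_of_le hab] : ContinuousOn g (Set.uIcc a b)).intervalIntegrable)
  linarith [this]

lemma aux_slope0 {f : ℝ → ℝ} {d : ℝ} (h : HasDerivAt f d 0) :
    Filter.Tendsto (fun t => (f t - f 0) / t) (nhdsWithin 0 (Set.Ioi 0)) (nhds d) := by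
  have h2 := (hasDerivAt_iff_tendsto_slope.1 h).mono_left
    (nhdsWithin_mono 0 (fun x hx => ne_of_gt hx))
  have : ∀ t : ℝ, slope f 0 t = (f t - f 0) / t := by
    intro t; rw [slope_def_field]; ring_nf
  exact h2.congr this

lemma aux_hasDerivWithinAt_of_tendsto {Φ : ℝ → ℝ → ℝ} {σ t s d : ℝ}
    (h : Filter.Tendsto (fun h' => (Φ (σ+s+h') (t-s-h') - Φ (σ+s) (t-s))/h')
      (nhdsWithin 0 (Set.Ioi 0)) (nhds d)) :
    HasDerivWithinAt (fun r => Φ (σ+r) (t-r)) d (Set.Ioi s) s := by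
  rw [hasDerivWithinAt_iff_tendsto_slope]
  have heq : Set.Ioi s \ {s} = Set.Ioi s := Set.diff_singleton_eq_self (fun hs => lt_irrefl s hs)
  rw [heq]
  have hmap : Filter.Tendsto (fun y => y - s) (nhdsWithin s (Set.Ioi s))
      (nhdsWithin 0 (Set.Ioi 0)) := by
    apply tendsto_nhdsWithin_of_tendsto_nhds_of_eventually_within
    · have : Filter.Tendsto (fun y : ℝ => y - s) (nhds s) (nhds (s - s)) :=
        (continuous_id.sub continuous_const).tendsto s
      simpa using this.mono_left nhdsWithin_le_nhds
    · filter_upwards [self_mem_nhdsWithin] with y hy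
      exact sub_pos.2 (show s < y from hy)
  have := h.comp hmap
  apply this.congr
  intro y
  simp only [Function.comp]
  rw [slope_def_field,
    show σ + s + (y - s) = σ + y by ring, show t - s - (y - s) = t - y by ring]

open MeasureTheory in
lemma aux_fubini (φ : ℝ × ℝ → ℝ) (hφ : Continuous φ) {b : ℝ} (hb : 0 ≤ b) :
    (∫ u in (0:ℝ)..b, ∫ z in (0:ℝ)..u, φ (u, z)) =
      ∫ z in (0:ℝ)..b, ∫ u in z..b, φ (u, z) := by
  set K2 : Set (ℝ × ℝ) := Set.Icc 0 b ×ˢ Set.Icc 0 b with hK2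
  set S : Set (ℝ × ℝ) := {q : ℝ × ℝ | q.2 ≤ q.1} ∩ K2 with hS
  have hSmeas : MeasurableSet S := (measurableSet_le measurable_snd measurable_fst).inter
    (measurableSet_Icc.prod measurableSet_Icc)
  set ψ : ℝ × ℝ → ℝ := S.indicator φ with hψ
  set ν := volume.restrict (Set.Ioc (0:ℝ) b) with hν
  have hfin : IsFiniteMeasure ν := by
    constructor
    rw [hν, Measure.restrict_apply_univ]
    exact lt_of_le_of_lt (le_of_eq Real.volume_Ioc) ENNReal.ofReal_lt_top
  obtain ⟨M, hM⟩ := (isCompact_Icc.prod isCompact_Icc).exists_bound_of_continuousOn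
    (hφ.continuousOn (s := K2))
  have hψb : ∀ p, ‖ψ p‖ ≤ max M 0 := by
    intro p
    by_cases hp : p ∈ S
    · rw [hψ, Set.indicator_of_mem hp]
      exact le_trans (hM p hp.2) (le_max_left _ _)
    · rw [hψ, Set.indicator_of_notMem hp]; simp
  have hψmeas : Measurable ψ := hφ.measurable.indicator hSmeas
  have hint : Integrable (Function.uncurry (fun u z => ψ (u, z))) (ν.prod ν) := by
    refine Integrable.mono' (integrable_const (max M 0)) ?_ ?_
    · exact Measurable.aestronglyMeasurable (by exact hψmeas)
    · exact Filter.Eventually.of_forall (fun p => hψb p)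
  have hswap := MeasureTheory.integral_integral_swap hint
  have hL : (∫ u in (0:ℝ)..b, ∫ z in (0:ℝ)..u, φ (u, z)) =
      ∫ u, (∫ z, ψ (u, z) ∂ν) ∂ν := by
    rw [intervalIntegral.integral_of_le hb]
    apply integral_congr_ae
    filter_upwards [ae_restrict_mem measurableSet_Ioc] with u hu
    have h1 : (∫ z in (0:ℝ)..u, φ (u, z)) = ∫ z in Set.Ioc (0:ℝ) u, φ (u, z) :=
      intervalIntegral.integral_of_le hu.1.le
    have hmeq : (fun z => ψ (u, z)) = ((fun z => (u, z)) ⁻¹' S).indicator (fun z => φ (u, z)) := by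
      funext z
      by_cases h : (u, z) ∈ S
      · rw [hψ, Set.indicator_of_mem h]
        exact (Set.indicator_of_mem (show z ∈ (fun z => (u, z)) ⁻¹' S from h)
          (fun z => φ (u, z))).symm
      · rw [hψ, Set.indicator_of_notMem h]
        exact (Set.indicator_of_notMem (show z ∉ (fun z => (u, z)) ⁻¹' S from h)
          (fun z => φ (u, z))).symm
    have hpre : MeasurableSet ((fun z => (u, z)) ⁻¹' S) :=
      hSmeas.preimage (measurable_const.prodMk measurable_id)
    have h2 : (∫ z, ψ (u, z) ∂ν) = ∫ z in Set.Ioc (0:ℝ) b ∩ ((fun z => (u, z)) ⁻¹' S),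
        φ (u, z) := by
      rw [hν, hmeq, MeasureTheory.setIntegral_indicator hpre]
    have h3 : Set.Ioc (0:ℝ) b ∩ ((fun z => (u, z)) ⁻¹' S) = Set.Ioc 0 u := by
      ext z
      simp only [Set.mem_inter_iff, Set.mem_Ioc, Set.mem_preimage, hS, hK2,
        Set.mem_setOf_eq, Set.mem_prod, Set.mem_Icc]
      constructor
      · rintro ⟨⟨hz0, _⟩, hzu, _⟩
        exact ⟨hz0, hzu⟩
      · rintro ⟨hz0, hzu⟩
        refine ⟨⟨hz0, le_trans hzu hu.2⟩, hzu, ⟨hu.1.le, hu.2⟩, ⟨hz0.le, le_trans hzu hu.2⟩⟩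
    rw [h1, h2, h3]
  have hR : (∫ z in (0:ℝ)..b, ∫ u in z..b, φ (u, z)) =
      ∫ z, (∫ u, ψ (u, z) ∂ν) ∂ν := by
    rw [intervalIntegral.integral_of_le hb]
    apply integral_congr_ae
    filter_upwards [ae_restrict_mem measurableSet_Ioc] with z hz
    have h1 : (∫ u in z..b, φ (u, z)) = ∫ u in Set.Ioc z b, φ (u, z) :=
      intervalIntegral.integral_of_le hz.2
    have hmeq : (fun u => ψ (u, z)) = ((fun u => (u, z)) ⁻¹' S).indicator (fun u => φ (u, z)) := by
      funext u
      by_cases h : (u, z) ∈ S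
      · rw [hψ, Set.indicator_of_mem h]
        exact (Set.indicator_of_mem (show u ∈ (fun u => (u, z)) ⁻¹' S from h)
          (fun u => φ (u, z))).symm
      · rw [hψ, Set.indicator_of_notMem h]
        exact (Set.indicator_of_notMem (show u ∉ (fun u => (u, z)) ⁻¹' S from h)
          (fun u => φ (u, z))).symm
    have hpre : MeasurableSet ((fun u => (u, z)) ⁻¹' S) :=
      hSmeas.preimage (measurable_id.prodMk measurable_const)
    have h2 : (∫ u, ψ (u, z) ∂ν) = ∫ u in Set.Ioc (0:ℝ) b ∩ ((fun u => (u, z)) ⁻¹' S),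
        φ (u, z) := by
      rw [hν, hmeq, MeasureTheory.setIntegral_indicator hpre]
    have h3 : Set.Ioc (0:ℝ) b ∩ ((fun u => (u, z)) ⁻¹' S) = Set.Icc z b := by
      ext u
      simp only [Set.mem_inter_iff, Set.mem_Ioc, Set.mem_preimage, hS, hK2,
        Set.mem_setOf_eq, Set.mem_prod, Set.mem_Icc]
      constructor
      · rintro ⟨⟨_, hub⟩, hzu, _⟩
        exact ⟨hzu, hub⟩
      · rintro ⟨hzu, hub⟩
        exact ⟨⟨lt_of_lt_of_le hz.1 hzu, hub⟩, hzu, ⟨(lt_of_lt_of_le hz.1 hzu).le, hub⟩,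
          ⟨hz.1.le, hz.2⟩⟩
    rw [h1, h2, h3, ← MeasureTheory.integral_Icc_eq_integral_Ioc]
  rw [hL, hR]
  exact hswap

open intervalIntegral Filter in
lemma aux_DPsi (Kt W : ℝ × ℝ → ℝ) (Q : ℝ → ℝ → ℝ) (L : ℝ → ℝ)
    (hKc : Continuous Kt) (hWc : Continuous W)
    (hQc : Continuous fun p : ℝ × ℝ => Q p.1 p.2)
    {σ' τ : ℝ} (hσ0 : 0 < σ') (hσ1 : σ' < 1) (hτ : 0 < τ)
    (hchar : ∀ σ0 s1 : ℝ, 0 ≤ σ0 → 0 ≤ s1 → σ0 + s1 ≤ 1 → s1 ≤ τ →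
      W (σ0 + s1, τ - s1) = W (σ0, τ) - ∫ r in (0:ℝ)..s1, Q (σ0 + r) (τ - r))
    {C : ℝ} (hC : 0 ≤ C)
    (hlip : ∀ h u : ℝ, 0 < h → h ≤ 1 - σ' → 0 ≤ u → u ≤ σ' →
      |Kt (σ' + h, u + h) - Kt (σ', u)| ≤ C * h)
    (hLder : ∀ u ∈ Set.Ioo (0:ℝ) σ', HasDerivAt (fun h => Kt (σ' + h, u + h)) (L u) 0) :
    Filter.Tendsto (fun h => ((∫ y in (0:ℝ)..(σ'+h), Kt (σ'+h, y) * W (y, τ-h)) -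
        ∫ y in (0:ℝ)..σ', Kt (σ', y) * W (y, τ)) / h) (nhdsWithin 0 (Set.Ioi 0))
      (nhds (Kt (σ', 0) * W (0, τ) +
        ∫ u in (0:ℝ)..σ', (L u * W (u, τ) - Kt (σ', u) * Q u τ))) := by
  have hσ1' : 0 < 1 - σ' := by linarith
  set h0 : ℝ := min (1 - σ') τ with hh0
  have hh0pos : 0 < h0 := lt_min hσ1' hτ
  set E : ℝ → ℝ → ℝ := fun h u => ∫ r in (0:ℝ)..h, Q (u + r) (τ - r) with hE
  have hEcont : ∀ h : ℝ, Continuous fun u => E h u := by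
    intro h
    exact intervalIntegral.continuous_parametric_intervalIntegral_of_continuous'
      (f := fun u r => Q (u + r) (τ - r))
      (hQc.comp ((continuous_fst.add continuous_snd).prodMk
        (continuous_const.sub continuous_snd))) 0 h
  obtain ⟨MW, hMW⟩ := (isCompact_Icc.prod isCompact_Icc).exists_bound_of_continuousOn
    (hWc.continuousOn (s := Set.Icc (0:ℝ) 1 ×ˢ Set.Icc 0 τ))
  obtain ⟨MK, hMK⟩ := (isCompact_Icc.prod isCompact_Icc).exists_bound_of_continuousOn
    (hKc.continuousOn (s := Set.Icc (0:ℝ) 1 ×ˢ Set.Icc (0:ℝ) 1))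
  obtain ⟨MQ, hMQ⟩ := (isCompact_Icc.prod isCompact_Icc).exists_bound_of_continuousOn
    (hQc.continuousOn (s := Set.Icc (0:ℝ) 1 ×ˢ Set.Icc 0 τ))
  have hMWpos : 0 ≤ MW := le_trans (norm_nonneg _) (hMW (0, 0) (by
    constructor <;> simp [Set.mem_Icc, hτ.le]))
  have hMKpos : 0 ≤ MK := le_trans (norm_nonneg _) (hMK (0, 0) (by
    constructor <;> simp [Set.mem_Icc]))
  have hMQpos : 0 ≤ MQ := le_trans (norm_nonneg _) (hMQ (0, 0) (by
    constructor <;> simp [Set.mem_Icc, hτ.le]))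
  set Ah : ℝ → ℝ := fun h => (∫ y in (0:ℝ)..h, Kt (σ'+h, y) * W (y, τ-h)) / h with hAh
  set Gg : ℝ → ℝ → ℝ := fun h u =>
    ((Kt (σ'+h, u+h) - Kt (σ', u)) / h) * W (u, τ) - Kt (σ'+h, u+h) * (E h u / h) with hGg
  have hIoo : Set.Ioo (0:ℝ) h0 ∈ nhdsWithin 0 (Set.Ioi 0) :=
    Ioo_mem_nhdsGT_of_mem ⟨le_refl 0, hh0pos⟩
  -- eventual identity
  have hident : ∀ h ∈ Set.Ioo (0:ℝ) h0,
      ((∫ y in (0:ℝ)..(σ'+h), Kt (σ'+h, y) * W (y, τ-h)) -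
        ∫ y in (0:ℝ)..σ', Kt (σ', y) * W (y, τ)) / h
      = Ah h + ∫ u in (0:ℝ)..σ', Gg h u := by
    intro h hh
    have hhp := hh.1
    have hh1 : h ≤ 1 - σ' := le_of_lt (lt_of_lt_of_le hh.2 (min_le_left _ _))
    have hhτ : h ≤ τ := le_of_lt (lt_of_lt_of_le hh.2 (min_le_right _ _))
    have hcont1 : Continuous fun y => Kt (σ'+h, y) * W (y, τ-h) :=
      ((hKc.comp (continuous_const.prodMk continuous_id)).mul
        (hWc.comp (continuous_id.prodMk continuous_const)))
    have hcontX : Continuous fun u => Kt (σ'+h, u+h) * W (u, τ) :=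
      ((hKc.comp (continuous_const.prodMk (continuous_id.add continuous_const))).mul
        (hWc.comp (continuous_id.prodMk continuous_const)))
    have hcontY : Continuous fun u => Kt (σ'+h, u+h) * E h u :=
      ((hKc.comp (continuous_const.prodMk (continuous_id.add continuous_const))).mul
        (hEcont h))
    have hcontZ : Continuous fun y => Kt (σ', y) * W (y, τ) :=
      ((hKc.comp (continuous_const.prodMk continuous_id)).mul
        (hWc.comp (continuous_id.prodMk continuous_const)))
    have hadd : (∫ y in (0:ℝ)..(σ'+h), Kt (σ'+h, y) * W (y, τ-h))
        = (∫ y in (0:ℝ)..h, Kt (σ'+h, y) * W (y, τ-h))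
          + ∫ y in h..(σ'+h), Kt (σ'+h, y) * W (y, τ-h) :=
      (integral_add_adjacent_intervals (hcont1.intervalIntegrable _ _)
        (hcont1.intervalIntegrable _ _)).symm
    have hshift : (∫ y in h..(σ'+h), Kt (σ'+h, y) * W (y, τ-h))
        = ∫ u in (0:ℝ)..σ', Kt (σ'+h, u+h) * W (u+h, τ-h) := by
      have := integral_comp_add_right (a := (0:ℝ)) (b := σ')
        (f := fun y => Kt (σ'+h, y) * W (y, τ-h)) h
      rw [zero_add] at this
      exact this.symm
    have hcgr : ∀ u ∈ Set.uIcc (0:ℝ) σ', Kt (σ'+h, u+h) * W (u+h, τ-h)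
        = Kt (σ'+h, u+h) * W (u, τ) - Kt (σ'+h, u+h) * E h u := by
      intro u hu
      rw [Set.uIcc_of_le hσ0.le] at hu
      rw [hchar u h hu.1 hhp.le (by linarith [hu.2]) hhτ]
      ring
    have hsubst : (∫ u in (0:ℝ)..σ', Kt (σ'+h, u+h) * W (u+h, τ-h))
        = ∫ u in (0:ℝ)..σ', (Kt (σ'+h, u+h) * W (u, τ) - Kt (σ'+h, u+h) * E h u) :=
      integral_congr hcgr
    rw [hadd, hshift, hsubst,
      integral_sub (hcontX.intervalIntegrable _ _) (hcontY.intervalIntegrable _ _)]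
    have hGgint : (∫ u in (0:ℝ)..σ', Gg h u)
        = ((∫ u in (0:ℝ)..σ', Kt (σ'+h, u+h) * W (u, τ))
          - (∫ u in (0:ℝ)..σ', Kt (σ'+h, u+h) * E h u)
          - ∫ y in (0:ℝ)..σ', Kt (σ', y) * W (y, τ)) / h := by
      rw [← integral_sub (hcontX.intervalIntegrable _ _) (hcontY.intervalIntegrable _ _),
        ← integral_sub ((hcontX.intervalIntegrable _ _).sub (hcontY.intervalIntegrable _ _))
          (hcontZ.intervalIntegrable _ _), ← intervalIntegral.integral_div]
      apply integral_congr
      intro u _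
      show Gg h u = _
      rw [hGg]
      ring
    rw [hGgint, hAh]
    ring
  -- limit of the boundary term
  have hTA : Filter.Tendsto Ah (nhdsWithin 0 (Set.Ioi 0))
      (nhds (Kt (σ', 0) * W (0, τ))) := by
    rw [Metric.tendsto_nhdsWithin_nhds]
    intro ε hε
    have hψA : Continuous fun q : ℝ × ℝ => Kt (σ' + q.1, q.2) * W (q.2, τ - q.1) :=
      ((hKc.comp ((continuous_const.add continuous_fst).prodMk continuous_snd)).mul
        (hWc.comp (continuous_snd.prodMk (continuous_const.sub continuous_fst))))
    obtain ⟨δ, hδpos, hδ⟩ := Metric.continuousAt_iff.1 (hψA.continuousAt (x := (0, 0)))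
      (ε/2) (by linarith)
    refine ⟨δ, hδpos, ?_⟩
    intro h hhIoi hdist
    have hhp : 0 < h := hhIoi
    have hψ00 : Kt (σ' + 0, (0:ℝ)) * W ((0:ℝ), τ - 0) = Kt (σ', 0) * W (0, τ) := by
      norm_num
    have hbd : ∀ y ∈ Set.uIoc (0:ℝ) h,
        ‖Kt (σ' + h, y) * W (y, τ - h) - Kt (σ', 0) * W (0, τ)‖ ≤ ε/2 := by
      intro y hy
      rw [Set.uIoc_of_le hhp.le] at hy
      have hd2 : dist ((h, y) : ℝ × ℝ) (0, 0) < δ := by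
        rw [Prod.dist_eq]
        have h1 : dist h 0 < δ := hdist
        have h2 : dist y 0 < δ := by
          rw [Real.dist_eq, sub_zero, abs_of_pos hy.1]
          rw [Real.dist_eq, sub_zero, abs_of_pos hhp] at h1
          linarith [hy.2]
        exact max_lt h1 h2
      have := hδ hd2
      rw [hψ00] at this
      rw [Real.dist_eq] at this
      exact le_of_lt this
    have hA1 : (∫ y in (0:ℝ)..h, (Kt (σ'+h, y) * W (y, τ-h) - Kt (σ', 0) * W (0, τ)))
        = (∫ y in (0:ℝ)..h, Kt (σ'+h, y) * W (y, τ-h)) - h * (Kt (σ', 0) * W (0, τ)) := by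
      have hci : IntervalIntegrable (fun y => Kt (σ'+h, y) * W (y, τ-h))
          MeasureTheory.volume 0 h :=
        (((hKc.comp (continuous_const.prodMk continuous_id)).mul
          (hWc.comp (continuous_id.prodMk continuous_const))) :
            Continuous fun y => Kt (σ'+h, y) * W (y, τ-h)).intervalIntegrable _ _
      rw [intervalIntegral.integral_sub hci intervalIntegrable_const,
        intervalIntegral.integral_const]
      simp [smul_eq_mul]
    have hA2 : ‖(∫ y in (0:ℝ)..h, (Kt (σ'+h, y) * W (y, τ-h) - Kt (σ', 0) * W (0, τ)))‖
        ≤ (ε/2) * |h - 0| := intervalIntegral.norm_integral_le_of_norm_le_const hbd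
    rw [Real.dist_eq]
    have hAh2 : Ah h - Kt (σ', 0) * W (0, τ)
        = ((∫ y in (0:ℝ)..h, Kt (σ'+h, y) * W (y, τ-h)) - h * (Kt (σ', 0) * W (0, τ))) / h := by
      rw [hAh]
      field_simp
    rw [hAh2, ← hA1]
    rw [abs_div]
    rw [abs_of_pos hhp]
    calc |∫ y in (0:ℝ)..h, (Kt (σ'+h, y) * W (y, τ-h) - Kt (σ', 0) * W (0, τ))| / h
        ≤ ((ε/2) * |h - 0|) / h := by gcongr; exact hA2
      _ = ε/2 := by
          rw [sub_zero, abs_of_pos hhp, mul_div_assoc, div_self (ne_of_gt hhp), mul_one]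
      _ < ε := by linarith
  -- limit of the main integral term
  have hTI : Filter.Tendsto (fun h => ∫ u in (0:ℝ)..σ', Gg h u) (nhdsWithin 0 (Set.Ioi 0))
      (nhds (∫ u in (0:ℝ)..σ', (L u * W (u, τ) - Kt (σ', u) * Q u τ))) := by
    apply intervalIntegral.tendsto_integral_filter_of_dominated_convergence
      (bound := fun _ => C * MW + MK * MQ)
    · filter_upwards [hIoo] with h hh
      exact (((((hKc.comp (continuous_const.prodMk (continuous_id.add continuous_const))).sub
        (hKc.comp (continuous_const.prodMk continuous_id))).div_const h).mul
        (hWc.comp (continuous_id.prodMk continuous_const))).sub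
        ((hKc.comp (continuous_const.prodMk (continuous_id.add continuous_const))).mul
          ((hEcont h).div_const h))).aestronglyMeasurable
    · filter_upwards [hIoo] with h hh
      have hhp := hh.1
      have hh1 : h ≤ 1 - σ' := le_of_lt (lt_of_lt_of_le hh.2 (min_le_left _ _))
      have hhτ : h ≤ τ := le_of_lt (lt_of_lt_of_le hh.2 (min_le_right _ _))
      apply MeasureTheory.ae_of_all
      intro u hu
      rw [Set.uIoc_of_le hσ0.le] at hu
      have hu0 : 0 ≤ u := hu.1.le
      have huσ : u ≤ σ' := hu.2
      have hb1 : |(Kt (σ'+h, u+h) - Kt (σ', u)) / h| ≤ C := by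
        rw [abs_div, abs_of_pos hhp, div_le_iff₀ hhp]
        exact hlip h u hhp hh1 hu0 huσ
      have hb2 : |W (u, τ)| ≤ MW := hMW (u, τ)
        (Set.mk_mem_prod (Set.mem_Icc.mpr ⟨hu0, by linarith⟩)
          (Set.mem_Icc.mpr ⟨hτ.le, le_refl τ⟩))
      have hb3 : |Kt (σ'+h, u+h)| ≤ MK := hMK (σ'+h, u+h)
        (Set.mk_mem_prod (Set.mem_Icc.mpr ⟨by linarith, by linarith⟩)
          (Set.mem_Icc.mpr ⟨by linarith, by linarith⟩))
      have hb4 : |E h u / h| ≤ MQ := by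
        rw [abs_div, abs_of_pos hhp, div_le_iff₀ hhp]
        have : ∀ r ∈ Set.uIoc (0:ℝ) h, ‖Q (u + r) (τ - r)‖ ≤ MQ := by
          intro r hr
          rw [Set.uIoc_of_le hhp.le] at hr
          exact hMQ (u + r, τ - r)
            (Set.mk_mem_prod (Set.mem_Icc.mpr ⟨by linarith [hr.1.le], by linarith [hr.2]⟩)
              (Set.mem_Icc.mpr ⟨by linarith [hr.2], by linarith [hr.1]⟩))
        have := intervalIntegral.norm_integral_le_of_norm_le_const this
        rw [sub_zero, abs_of_pos hhp] at this
        exact this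
      calc ‖Gg h u‖ ≤ |(Kt (σ'+h, u+h) - Kt (σ', u)) / h| * |W (u, τ)|
            + |Kt (σ'+h, u+h)| * |E h u / h| := by
            rw [hGg]
            refine le_trans (abs_sub _ _) ?_
            rw [abs_mul, abs_mul]
      _ ≤ C * MW + MK * MQ := by
            apply add_le_add
            · exact mul_le_mul hb1 hb2 (abs_nonneg _) hC
            · exact mul_le_mul hb3 hb4 (abs_nonneg _) (le_trans (abs_nonneg _) hb3)
    · exact intervalIntegrable_const
    · have h2 : ∀ᵐ (u : ℝ) ∂MeasureTheory.volume, u ≠ σ' := by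
        rw [Filter.eventually_iff, MeasureTheory.mem_ae_iff]
        have : {x : ℝ | x ≠ σ'}ᶜ = {σ'} := by
          ext x; simp
        rw [this]
        exact MeasureTheory.measure_singleton σ'
      filter_upwards [h2] with u hne huI
      have hu : u ∈ Set.Ioo (0:ℝ) σ' := by
        rw [Set.uIoc_of_le hσ0.le] at huI
        exact ⟨huI.1, lt_of_le_of_ne huI.2 hne⟩
      have t1 : Filter.Tendsto (fun h => (Kt (σ'+h, u+h) - Kt (σ', u)) / h)
          (nhdsWithin 0 (Set.Ioi 0)) (nhds (L u)) := by
        have := aux_slope0 (hLder u hu)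
        simpa using this
      have t2 : Filter.Tendsto (fun h => Kt (σ'+h, u+h)) (nhdsWithin 0 (Set.Ioi 0))
          (nhds (Kt (σ', u))) := by
        have hc : Continuous fun h : ℝ => Kt (σ'+h, u+h) :=
          hKc.comp ((continuous_const.add continuous_id).prodMk
            (continuous_const.add continuous_id))
        have := (hc.tendsto 0).mono_left
          (nhdsWithin_le_nhds (s := Set.Ioi (0:ℝ)))
        simpa using this
      have t3 : Filter.Tendsto (fun h => E h u / h) (nhdsWithin 0 (Set.Ioi 0))
          (nhds (Q u τ)) := by
        have hρ : Continuous fun r => Q (u + r) (τ - r) :=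
          hQc.comp ((continuous_const.add continuous_id).prodMk
            (continuous_const.sub continuous_id))
        have hD : HasDerivAt (fun h => E h u) (Q (u + 0) (τ - 0)) 0 := by
          apply intervalIntegral.integral_hasDerivAt_right
            (hρ.intervalIntegrable _ _)
            ⟨Set.univ, Filter.univ_mem, hρ.aestronglyMeasurable.restrict⟩
            hρ.continuousAt
        have := aux_slope0 hD
        rw [hE] at this
        simp only [intervalIntegral.integral_same, sub_zero, add_zero] at this
        simpa using this
      exact (t1.mul (tendsto_const_nhds (x := W (u, τ)))).sub (t2.mul t3)
  have := hTA.add hTI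
  apply Filter.Tendsto.congr' ?_ this
  filter_upwards [hIoo] with h hh
  exact (hident h hh).symm

/-- (Finite-time stabilization of one normalized equation by
backstepping.) Given a `C¹` kernel `k` solving the kernel equations on the triangle
`𝒯 = {(σ̄, ȳ) : 0 ≤ ȳ ≤ σ̄ ≤ 1}` and a solution `w` of the plant
`∂w/∂t = ∂w/∂σ̄ + G w(0,·) + ∫₀^σ̄ F w` with feedback boundary condition
`w(1,t) = ∫₀¹ k(1,ȳ) w(ȳ,t) dȳ`, one has `w(σ̄,t) = 0` for every `σ̄ ∈ [0,1]`
and every `t ≥ 1`. -/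
theorem backstepping_finite_time_stabilization
    (G : ℝ → ℝ) (F : ℝ → ℝ → ℝ)
    (hG : ContinuousOn G (Set.Icc 0 1))
    (hF : ContinuousOn (fun p : ℝ × ℝ => F p.1 p.2)
      {p : ℝ × ℝ | 0 ≤ p.2 ∧ p.2 ≤ p.1 ∧ p.1 ≤ 1})
    (k : ℝ → ℝ → ℝ)
    (hk_C1 : ContDiffOn ℝ 1 (fun p : ℝ × ℝ => k p.1 p.2)
      {p : ℝ × ℝ | 0 ≤ p.2 ∧ p.2 ≤ p.1 ∧ p.1 ≤ 1})
    (hk_pde : ∀ σbar ybar : ℝ, 0 ≤ ybar → ybar ≤ σbar → σbar ≤ 1 →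
      deriv (fun s => k s ybar) σbar + deriv (fun y => k σbar y) ybar
        = (∫ ξ in ybar..σbar, k σbar ξ * F ξ ybar) - F σbar ybar)
    (hk_bc : ∀ σbar ∈ Set.Icc (0:ℝ) 1,
      k σbar 0 = (∫ ybar in (0:ℝ)..σbar, k σbar ybar * G ybar) - G σbar)
    (w : ℝ → ℝ → ℝ)
    (hw_cont : ContinuousOn (fun p : ℝ × ℝ => w p.1 p.2) (Set.Icc 0 1 ×ˢ Set.Ici 0))
    (hw_C1 : ContDiffOn ℝ 1 (fun p : ℝ × ℝ => w p.1 p.2) (Set.Ioo 0 1 ×ˢ Set.Ioi 0))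
    (hw_pde : ∀ σbar ∈ Set.Ioo (0:ℝ) 1, ∀ t ∈ Set.Ioi (0:ℝ),
      deriv (fun τ => w σbar τ) t
        = deriv (fun s => w s t) σbar
          + G σbar * w 0 t
          + ∫ ybar in (0:ℝ)..σbar, F σbar ybar * w ybar t)
    (hw_bc : ∀ t ≥ (0:ℝ), w 1 t = ∫ ybar in (0:ℝ)..1, k 1 ybar * w ybar t) :
    ∀ σbar ∈ Set.Icc (0:ℝ) 1, ∀ t ≥ (1:ℝ), w σbar t = 0 := by
  classical
  -- the triangle and the domain
  have hTclosed : IsClosed {p : ℝ × ℝ | 0 ≤ p.2 ∧ p.2 ≤ p.1 ∧ p.1 ≤ 1} := by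
    have : {p : ℝ × ℝ | 0 ≤ p.2 ∧ p.2 ≤ p.1 ∧ p.1 ≤ 1}
        = {p : ℝ × ℝ | 0 ≤ p.2} ∩ ({p : ℝ × ℝ | p.2 ≤ p.1} ∩ {p : ℝ × ℝ | p.1 ≤ 1}) := rfl
    rw [this]
    exact (isClosed_le continuous_const continuous_snd).inter
      ((isClosed_le continuous_snd continuous_fst).inter
        (isClosed_le continuous_fst continuous_const))
  have hDclosed : IsClosed (Set.Icc (0:ℝ) 1 ×ˢ Set.Ici (0:ℝ)) := isClosed_Icc.prod isClosed_Ici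
  obtain ⟨We, hWec, hWeeq⟩ := ext_cont hDclosed hw_cont
  obtain ⟨Ke, hKec, hKeeq⟩ := ext_cont hTclosed hk_C1.continuousOn
  obtain ⟨Fe, hFec, hFeeq⟩ := ext_cont hTclosed hF
  obtain ⟨Ge, hGec, hGeeq⟩ := ext_cont isClosed_Icc hG
  -- source terms and the transformed integral
  set Q : ℝ → ℝ → ℝ :=
    fun x t => Ge x * We (0, t) + ∫ z in (0:ℝ)..x, Fe (x, z) * We (z, t) with hQdef
  have hQc : Continuous fun p : ℝ × ℝ => Q p.1 p.2 := by
    apply Continuous.add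
    · exact (hGec.comp continuous_fst).mul (hWec.comp (continuous_const.prodMk continuous_snd))
    · exact intervalIntegral.continuous_parametric_intervalIntegral_of_continuous
        (f := fun (p : ℝ × ℝ) (z : ℝ) => Fe (p.1, z) * We (z, p.2))
        ((hFec.comp ((continuous_fst.fst).prodMk continuous_snd)).mul
          (hWec.comp (continuous_snd.prodMk (continuous_fst.snd))))
        (s := fun p : ℝ × ℝ => p.1) continuous_fst
  set Psi : ℝ → ℝ → ℝ := fun x t => ∫ y in (0:ℝ)..x, Ke (x, y) * We (y, t) with hPsidef
  have hPsic : Continuous fun p : ℝ × ℝ => Psi p.1 p.2 := by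
    exact intervalIntegral.continuous_parametric_intervalIntegral_of_continuous
      (f := fun (p : ℝ × ℝ) (y : ℝ) => Ke (p.1, y) * We (y, p.2))
      ((hKec.comp ((continuous_fst.fst).prodMk continuous_snd)).mul
        (hWec.comp (continuous_snd.prodMk (continuous_fst.snd))))
      (s := fun p : ℝ × ℝ => p.1) continuous_fst
  -- derivative of We along characteristics
  have hWline : ∀ σ0 t0 r : ℝ, 0 < σ0 + r → σ0 + r < 1 → 0 < t0 - r →
      HasDerivAt (fun s => We (σ0 + s, t0 - s)) (-(Q (σ0 + r) (t0 - r))) r := by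
    intro σ0 t0 r h1 h2 h3
    have hopen : IsOpen (Set.Ioo (0:ℝ) 1 ×ˢ Set.Ioi (0:ℝ)) := isOpen_Ioo.prod isOpen_Ioi
    have hp : ((σ0 + r, t0 - r) : ℝ × ℝ) ∈ Set.Ioo (0:ℝ) 1 ×ˢ Set.Ioi (0:ℝ) :=
      Set.mk_mem_prod ⟨h1, h2⟩ h3
    have hdiff : DifferentiableAt ℝ (fun p : ℝ × ℝ => w p.1 p.2) (σ0 + r, t0 - r) :=
      (hw_C1.contDiffAt (hopen.mem_nhds hp)).differentiableAt one_ne_zero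
    set Dw := fderiv ℝ (fun p : ℝ × ℝ => w p.1 p.2) (σ0 + r, t0 - r) with hDwdef
    have hfd : HasFDerivAt (fun p : ℝ × ℝ => w p.1 p.2) Dw (σ0 + r, t0 - r) := hdiff.hasFDerivAt
    have hEq : (fun p : ℝ × ℝ => We p) =ᶠ[nhds (σ0 + r, t0 - r)] (fun p => w p.1 p.2) := by
      filter_upwards [hopen.mem_nhds hp] with q hq
      exact hWeeq q (Set.mk_mem_prod ⟨hq.1.1.le, hq.1.2.le⟩ (show (0:ℝ) < q.2 from hq.2).le)
    have hfdW : HasFDerivAt (fun p : ℝ × ℝ => We p) Dw (σ0 + r, t0 - r) :=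
      hfd.congr_of_eventuallyEq hEq
    have hline : HasDerivAt (fun s : ℝ => ((σ0 + s, t0 - s) : ℝ × ℝ)) (1, -1) r :=
      HasDerivAt.prodMk ((hasDerivAt_id r).const_add σ0) ((hasDerivAt_id r).const_sub t0)
    have hcomp : HasDerivAt (fun s => We (σ0 + s, t0 - s)) (Dw (1, -1)) r :=
      hfdW.comp_hasDerivAt r hline
    have hx : HasDerivAt (fun s => w s (t0 - r)) (Dw (1, 0)) (σ0 + r) := by
      have hl : HasDerivAt (fun s : ℝ => ((s, t0 - r) : ℝ × ℝ)) (1, 0) (σ0 + r) :=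
        HasDerivAt.prodMk (hasDerivAt_id _) (hasDerivAt_const _ _)
      have h' := hfd.comp_hasDerivAt (σ0 + r) hl
      exact h'
    have ht' : HasDerivAt (fun τ' => w (σ0 + r) τ') (Dw (0, 1)) (t0 - r) := by
      have hl : HasDerivAt (fun τ' : ℝ => ((σ0 + r, τ') : ℝ × ℝ)) (0, 1) (t0 - r) :=
        HasDerivAt.prodMk (hasDerivAt_const _ _) (hasDerivAt_id _)
      have h' := hfd.comp_hasDerivAt (t0 - r) hl
      exact h'
    have hval : Dw (1, -1) = -(Q (σ0 + r) (t0 - r)) := by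
      have hsplit : ((1:ℝ), (-1:ℝ)) = ((1:ℝ), (0:ℝ)) - ((0:ℝ), (1:ℝ)) := by
        rw [Prod.mk_sub_mk]; norm_num
      have hsum : Dw (1, -1) = Dw (1, 0) - Dw (0, 1) := by rw [hsplit, map_sub]
      have h10 := hx.deriv
      have h01 := ht'.deriv
      have hpde := hw_pde (σ0 + r) ⟨h1, h2⟩ (t0 - r) h3
      have e1 : Ge (σ0 + r) = G (σ0 + r) := hGeeq _ (Set.mem_Icc.mpr ⟨h1.le, h2.le⟩)
      have e2 : We (0, t0 - r) = w 0 (t0 - r) := hWeeq _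
        (Set.mk_mem_prod ⟨le_refl 0, by norm_num⟩ h3.le)
      have e3 : (∫ z in (0:ℝ)..(σ0 + r), Fe (σ0 + r, z) * We (z, t0 - r))
          = ∫ y in (0:ℝ)..(σ0 + r), F (σ0 + r) y * w y (t0 - r) := by
        apply intervalIntegral.integral_congr
        intro z hz
        rw [Set.uIcc_of_le (by linarith : (0:ℝ) ≤ σ0 + r)] at hz
        have hF1 : Fe (σ0 + r, z) = F (σ0 + r) z := hFeeq (σ0 + r, z) ⟨hz.1, hz.2, show σ0 + r ≤ 1 by linarith⟩
        have hW1 : We (z, t0 - r) = w z (t0 - r) :=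
          hWeeq (z, t0 - r) (Set.mk_mem_prod ⟨hz.1, by linarith [hz.2]⟩ h3.le)
        show Fe (σ0 + r, z) * We (z, t0 - r) = F (σ0 + r) z * w z (t0 - r)
        rw [hF1, hW1]
      rw [hsum, ← h10, ← h01, hpde, hQdef]
      simp only []
      rw [e1, e2, e3]
      ring
    rw [hval] at hcomp
    exact hcomp
  -- integrated characteristic identity
  have charId : ∀ σ0 t0 s1 : ℝ, 0 ≤ σ0 → 0 ≤ s1 → σ0 + s1 ≤ 1 → s1 ≤ t0 →
      We (σ0 + s1, t0 - s1) = We (σ0, t0) - ∫ r in (0:ℝ)..s1, Q (σ0 + r) (t0 - r) := by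
    intro σ0 t0 s1 h0 hs1 hle ht0
    have hcont1 : Continuous fun r => We (σ0 + r, t0 - r) :=
      hWec.comp ((continuous_const.add continuous_id).prodMk
        (continuous_const.sub continuous_id))
    have hcontQ : Continuous fun r => -(Q (σ0 + r) (t0 - r)) :=
      (hQc.comp ((continuous_const.add continuous_id).prodMk
        (continuous_const.sub continuous_id))).neg
    have hftc := ftc_right (f := fun r => We (σ0 + r, t0 - r))
      (g := fun r => -(Q (σ0 + r) (t0 - r))) hs1 hcont1.continuousOn
      (fun x hx => (hWline σ0 t0 x (by linarith [hx.1]) (by linarith [hx.2])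
        (by linarith [hx.2])).hasDerivWithinAt)
      hcontQ.continuousOn
    have hftc' : We (σ0 + s1, t0 - s1) = We (σ0 + 0, t0 - 0)
        + ∫ x in (0:ℝ)..s1, -(Q (σ0 + x) (t0 - x)) := hftc
    rw [hftc', intervalIntegral.integral_neg]
    simp only [add_zero, sub_zero]
    ring
  -- Lipschitz estimate for the kernel on the triangle
  obtain ⟨CK, hCK0, hKlip⟩ : ∃ CK : ℝ, 0 ≤ CK ∧ ∀ p ∈ {p : ℝ × ℝ | 0 ≤ p.2 ∧ p.2 ≤ p.1 ∧ p.1 ≤ 1},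
      ∀ q ∈ {p : ℝ × ℝ | 0 ≤ p.2 ∧ p.2 ≤ p.1 ∧ p.1 ≤ 1},
      |Ke p - Ke q| ≤ CK * dist p q := by
    have hTconv : Convex ℝ {p : ℝ × ℝ | 0 ≤ p.2 ∧ p.2 ≤ p.1 ∧ p.1 ≤ 1} := by
      intro p hp q hq a b ha hb hab
      obtain ⟨hp1, hp2, hp3⟩ := hp
      obtain ⟨hq1, hq2, hq3⟩ := hq
      refine ⟨?_, ?_, ?_⟩
      · show 0 ≤ (a • p + b • q).2
        simp only [Prod.snd_add, Prod.smul_snd, smul_eq_mul]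
        nlinarith
      · show (a • p + b • q).2 ≤ (a • p + b • q).1
        simp only [Prod.snd_add, Prod.smul_snd, Prod.fst_add, Prod.smul_fst, smul_eq_mul]
        nlinarith
      · show (a • p + b • q).1 ≤ 1
        simp only [Prod.fst_add, Prod.smul_fst, smul_eq_mul]
        nlinarith
    have hTcomp : IsCompact {p : ℝ × ℝ | 0 ≤ p.2 ∧ p.2 ≤ p.1 ∧ p.1 ≤ 1} :=
      (isCompact_Icc.prod isCompact_Icc).of_isClosed_subset hTclosed
        (fun p hp => Set.mk_mem_prod
          (Set.mem_Icc.mpr ⟨le_trans hp.1 hp.2.1, hp.2.2⟩)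
          (Set.mem_Icc.mpr ⟨hp.1, le_trans hp.2.1 hp.2.2⟩))
    have hTU : UniqueDiffOn ℝ {p : ℝ × ℝ | 0 ≤ p.2 ∧ p.2 ≤ p.1 ∧ p.1 ≤ 1} := by
      apply uniqueDiffOn_convex hTconv
      refine ⟨((1:ℝ)/2, (1:ℝ)/4), ?_⟩
      apply mem_interior.2
      refine ⟨{p : ℝ × ℝ | 0 < p.2 ∧ p.2 < p.1 ∧ p.1 < 1}, ?_, ?_, by norm_num⟩
      · exact fun p hp => ⟨hp.1.le, hp.2.1.le, hp.2.2.le⟩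
      · have : {p : ℝ × ℝ | 0 < p.2 ∧ p.2 < p.1 ∧ p.1 < 1}
            = {p : ℝ × ℝ | 0 < p.2} ∩ ({p : ℝ × ℝ | p.2 < p.1} ∩ {p : ℝ × ℝ | p.1 < 1}) := rfl
        rw [this]
        exact (isOpen_lt continuous_const continuous_snd).inter
          ((isOpen_lt continuous_snd continuous_fst).inter
            (isOpen_lt continuous_fst continuous_const))
    have hdiffble : DifferentiableOn ℝ (fun p : ℝ × ℝ => k p.1 p.2)
        {p : ℝ × ℝ | 0 ≤ p.2 ∧ p.2 ≤ p.1 ∧ p.1 ≤ 1} := hk_C1.differentiableOn one_ne_zero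
    have hfdc : ContinuousOn (fderivWithin ℝ (fun p : ℝ × ℝ => k p.1 p.2)
        {p : ℝ × ℝ | 0 ≤ p.2 ∧ p.2 ≤ p.1 ∧ p.1 ≤ 1})
        {p : ℝ × ℝ | 0 ≤ p.2 ∧ p.2 ≤ p.1 ∧ p.1 ≤ 1} :=
      hk_C1.continuousOn_fderivWithin hTU le_rfl
    obtain ⟨C0, hC0⟩ := hTcomp.exists_bound_of_continuousOn hfdc
    refine ⟨max C0 0, le_max_right _ _, ?_⟩
    have hlip : LipschitzOnWith (max C0 0).toNNReal (fun p : ℝ × ℝ => k p.1 p.2)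
        {p : ℝ × ℝ | 0 ≤ p.2 ∧ p.2 ≤ p.1 ∧ p.1 ≤ 1} := by
      apply Convex.lipschitzOnWith_of_nnnorm_fderivWithin_le hdiffble ?_ hTconv
      intro x hx
      rw [← NNReal.coe_le_coe, coe_nnnorm, Real.coe_toNNReal _ (le_max_right C0 0)]
      exact le_trans (hC0 x hx) (le_max_left _ _)
    intro p hp q hq
    have hd := hlip.dist_le_mul p hp q hq
    rw [Real.dist_eq] at hd
    rw [hKeeq p hp, hKeeq q hq]
    calc |(fun p : ℝ × ℝ => k p.1 p.2) p - (fun p : ℝ × ℝ => k p.1 p.2) q|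
        ≤ ((max C0 0).toNNReal : ℝ) * dist p q := hd
      _ = max C0 0 * dist p q := by rw [Real.coe_toNNReal _ (le_max_right C0 0)]
  -- pointwise derivative of the kernel in the diagonal direction
  have hLder : ∀ σ' ∈ Set.Ioo (0:ℝ) 1, ∀ u ∈ Set.Ioo (0:ℝ) σ',
      HasDerivAt (fun h => Ke (σ' + h, u + h))
        (deriv (fun s => k s u) σ' + deriv (fun y => k σ' y) u) 0 := by
    intro σ' hσ' u hu
    have hUopen : IsOpen {p : ℝ × ℝ | 0 < p.2 ∧ p.2 < p.1 ∧ p.1 < 1} := by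
      have : {p : ℝ × ℝ | 0 < p.2 ∧ p.2 < p.1 ∧ p.1 < 1}
          = {p : ℝ × ℝ | 0 < p.2} ∩ ({p : ℝ × ℝ | p.2 < p.1} ∩ {p : ℝ × ℝ | p.1 < 1}) := rfl
      rw [this]
      exact (isOpen_lt continuous_const continuous_snd).inter
        ((isOpen_lt continuous_snd continuous_fst).inter
          (isOpen_lt continuous_fst continuous_const))
    have hpU : ((σ', u) : ℝ × ℝ) ∈ {p : ℝ × ℝ | 0 < p.2 ∧ p.2 < p.1 ∧ p.1 < 1} :=
      ⟨hu.1, hu.2, hσ'.2⟩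
    have hmem : {p : ℝ × ℝ | 0 ≤ p.2 ∧ p.2 ≤ p.1 ∧ p.1 ≤ 1} ∈ nhds ((σ', u) : ℝ × ℝ) :=
      Filter.mem_of_superset (hUopen.mem_nhds hpU)
        (fun p hp => ⟨hp.1.le, hp.2.1.le, hp.2.2.le⟩)
    have hdiff : DifferentiableAt ℝ (fun p : ℝ × ℝ => k p.1 p.2) (σ', u) :=
      (hk_C1.contDiffAt hmem).differentiableAt one_ne_zero
    set Dk := fderiv ℝ (fun p : ℝ × ℝ => k p.1 p.2) (σ', u) with hDk
    have hfd : HasFDerivAt (fun p : ℝ × ℝ => k p.1 p.2) Dk (σ', u) := hdiff.hasFDerivAt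
    have hEq : (fun p : ℝ × ℝ => Ke p) =ᶠ[nhds ((σ', u) : ℝ × ℝ)] (fun p => k p.1 p.2) := by
      filter_upwards [hmem] with q hq
      exact hKeeq q hq
    have hfdK : HasFDerivAt (fun p : ℝ × ℝ => Ke p) Dk (σ', u) :=
      hfd.congr_of_eventuallyEq hEq
    have hpt : ((σ', u) : ℝ × ℝ) = (σ' + 0, u + 0) := by norm_num
    rw [hpt] at hfdK
    have hline : HasDerivAt (fun h : ℝ => ((σ' + h, u + h) : ℝ × ℝ)) (1, 1) 0 :=
      HasDerivAt.prodMk ((hasDerivAt_id 0).const_add σ') ((hasDerivAt_id 0).const_add u)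
    have hcomp := hfdK.comp_hasDerivAt 0 hline
    have hx : HasDerivAt (fun s => k s u) (Dk (1, 0)) σ' := by
      have hl : HasDerivAt (fun s : ℝ => ((s, u) : ℝ × ℝ)) (1, 0) σ' :=
        HasDerivAt.prodMk (hasDerivAt_id _) (hasDerivAt_const _ _)
      have h' := hfd.comp_hasDerivAt σ' hl
      exact h'
    have hy : HasDerivAt (fun y => k σ' y) (Dk (0, 1)) u := by
      have hl : HasDerivAt (fun y : ℝ => ((σ', y) : ℝ × ℝ)) (0, 1) u :=
        HasDerivAt.prodMk (hasDerivAt_const _ _) (hasDerivAt_id _)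
      have h' := hfd.comp_hasDerivAt u hl
      exact h'
    have hsum : Dk (1, 0) + Dk (0, 1) = Dk (1, 1) := by
      rw [← map_add]
      norm_num
    rw [hx.deriv, hy.deriv, hsum]
    exact hcomp
  -- the key algebraic identity : the transformed derivative vanishes
  have hDQ : ∀ σ' τ : ℝ, 0 < σ' → σ' < 1 → 0 < τ →
      (Ke (σ', 0) * We (0, τ) +
        ∫ u in (0:ℝ)..σ', ((deriv (fun s => k s u) σ' + deriv (fun y => k σ' y) u) * We (u, τ)
          - Ke (σ', u) * Q u τ)) = -(Q σ' τ) := by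
    intro σ' τ hσ0 hσ1 hτ
    set c0 : ℝ := We (0, τ) with hc0
    -- continuity facts
    have hA : Continuous fun u => ∫ ξ in u..σ', Ke (σ', ξ) * Fe (ξ, u) := by
      have h1 : Continuous fun u => ∫ ξ in σ'..u, Ke (σ', ξ) * Fe (ξ, u) :=
        intervalIntegral.continuous_parametric_intervalIntegral_of_continuous
          (f := fun (u : ℝ) (ξ : ℝ) => Ke (σ', ξ) * Fe (ξ, u))
          ((hKec.comp (continuous_const.prodMk continuous_snd)).mul
            (hFec.comp (continuous_snd.prodMk continuous_fst)))
          (s := fun u : ℝ => u) continuous_id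
      exact h1.neg.congr (fun u => by simp only [Pi.neg_apply]; rw [← intervalIntegral.integral_symm])
    have hB : Continuous fun u => ∫ z in (0:ℝ)..u, Fe (u, z) * We (z, τ) :=
      intervalIntegral.continuous_parametric_intervalIntegral_of_continuous
        (f := fun (u : ℝ) (z : ℝ) => Fe (u, z) * We (z, τ))
        ((hFec.comp (continuous_fst.prodMk continuous_snd)).mul
          (hWec.comp (continuous_snd.prodMk continuous_const)))
        (s := fun u : ℝ => u) continuous_id
    have hf1c : Continuous fun u => (∫ ξ in u..σ', Ke (σ', ξ) * Fe (ξ, u)) * We (u, τ) :=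
      hA.mul (hWec.comp (continuous_id.prodMk continuous_const))
    have hf2c : Continuous fun u => Fe (σ', u) * We (u, τ) :=
      (hFec.comp (continuous_const.prodMk continuous_id)).mul
        (hWec.comp (continuous_id.prodMk continuous_const))
    have hf3c : Continuous fun u => Ke (σ', u) * Ge u * c0 :=
      ((hKec.comp (continuous_const.prodMk continuous_id)).mul hGec).mul continuous_const
    have hf4c : Continuous fun u => Ke (σ', u) * (∫ z in (0:ℝ)..u, Fe (u, z) * We (z, τ)) :=
      (hKec.comp (continuous_const.prodMk continuous_id)).mul hB
    -- rewrite the integrand pointwise using the kernel PDE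
    have hstep1 : (∫ u in (0:ℝ)..σ',
        ((deriv (fun s => k s u) σ' + deriv (fun y => k σ' y) u) * We (u, τ)
          - Ke (σ', u) * Q u τ))
        = ∫ u in (0:ℝ)..σ',
          ((∫ ξ in u..σ', Ke (σ', ξ) * Fe (ξ, u)) * We (u, τ)
            - Fe (σ', u) * We (u, τ)
            - Ke (σ', u) * Ge u * c0
            - Ke (σ', u) * (∫ z in (0:ℝ)..u, Fe (u, z) * We (z, τ))) := by
      apply intervalIntegral.integral_congr
      intro u hu
      rw [Set.uIcc_of_le hσ0.le] at hu
      have hpde := hk_pde σ' u hu.1 hu.2 hσ1.le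
      have hinner : (∫ ξ in u..σ', k σ' ξ * F ξ u) = ∫ ξ in u..σ', Ke (σ', ξ) * Fe (ξ, u) := by
        apply intervalIntegral.integral_congr
        intro ξ hξ
        rw [Set.uIcc_of_le hu.2] at hξ
        have e1 : Ke (σ', ξ) = k σ' ξ := hKeeq (σ', ξ)
          ⟨le_trans hu.1 hξ.1, hξ.2, show σ' ≤ 1 from hσ1.le⟩
        have e2 : Fe (ξ, u) = F ξ u := hFeeq (ξ, u)
          ⟨hu.1, hξ.1, show ξ ≤ 1 by linarith [hξ.2]⟩
        show k σ' ξ * F ξ u = Ke (σ', ξ) * Fe (ξ, u)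
        rw [e1, e2]
      have e3 : Fe (σ', u) = F σ' u := hFeeq (σ', u) ⟨hu.1, hu.2, show σ' ≤ 1 from hσ1.le⟩
      show (deriv (fun s => k s u) σ' + deriv (fun y => k σ' y) u) * We (u, τ)
          - Ke (σ', u) * Q u τ = _
      rw [hpde, hinner, ← e3]
      show ((∫ ξ in u..σ', Ke (σ', ξ) * Fe (ξ, u)) - Fe (σ', u)) * We (u, τ)
          - Ke (σ', u) * (Ge u * We (0, τ) + ∫ z in (0:ℝ)..u, Fe (u, z) * We (z, τ)) = _
      rw [← hc0]
      ring
    -- split the integral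
    have hstep2 : (∫ u in (0:ℝ)..σ',
          ((∫ ξ in u..σ', Ke (σ', ξ) * Fe (ξ, u)) * We (u, τ)
            - Fe (σ', u) * We (u, τ)
            - Ke (σ', u) * Ge u * c0
            - Ke (σ', u) * (∫ z in (0:ℝ)..u, Fe (u, z) * We (z, τ))))
        = (∫ u in (0:ℝ)..σ', (∫ ξ in u..σ', Ke (σ', ξ) * Fe (ξ, u)) * We (u, τ))
          - (∫ u in (0:ℝ)..σ', Fe (σ', u) * We (u, τ))
          - (∫ u in (0:ℝ)..σ', Ke (σ', u) * Ge u) * c0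
          - (∫ u in (0:ℝ)..σ', Ke (σ', u) * (∫ z in (0:ℝ)..u, Fe (u, z) * We (z, τ))) := by
      rw [intervalIntegral.integral_sub (((hf1c.intervalIntegrable _ _).sub (hf2c.intervalIntegrable _ _)).sub (hf3c.intervalIntegrable _ _))
          (hf4c.intervalIntegrable _ _),
        intervalIntegral.integral_sub ((hf1c.intervalIntegrable _ _).sub (hf2c.intervalIntegrable _ _))
          (hf3c.intervalIntegrable _ _),
        intervalIntegral.integral_sub (hf1c.intervalIntegrable _ _)
          (hf2c.intervalIntegrable _ _),
        intervalIntegral.integral_mul_const]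
    -- Fubini : the double-integral terms agree
    have hfub : (∫ u in (0:ℝ)..σ', (∫ ξ in u..σ', Ke (σ', ξ) * Fe (ξ, u)) * We (u, τ))
        = ∫ u in (0:ℝ)..σ', Ke (σ', u) * (∫ z in (0:ℝ)..u, Fe (u, z) * We (z, τ)) := by
      have hφ : Continuous fun p : ℝ × ℝ => Ke (σ', p.1) * Fe (p.1, p.2) * We (p.2, τ) :=
        ((hKec.comp (continuous_const.prodMk continuous_fst)).mul hFec).mul
          (hWec.comp (continuous_snd.prodMk continuous_const))
      have hswap := aux_fubini (fun p : ℝ × ℝ => Ke (σ', p.1) * Fe (p.1, p.2) * We (p.2, τ))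
        hφ hσ0.le
      have hL : (∫ u in (0:ℝ)..σ', Ke (σ', u) * (∫ z in (0:ℝ)..u, Fe (u, z) * We (z, τ)))
          = ∫ u in (0:ℝ)..σ', ∫ z in (0:ℝ)..u, Ke (σ', u) * Fe (u, z) * We (z, τ) := by
        apply intervalIntegral.integral_congr
        intro u _
        show Ke (σ', u) * (∫ z in (0:ℝ)..u, Fe (u, z) * We (z, τ))
            = ∫ z in (0:ℝ)..u, Ke (σ', u) * Fe (u, z) * We (z, τ)
        rw [← intervalIntegral.integral_const_mul]
        apply intervalIntegral.integral_congr
        intro z _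
        ring
      have hR : (∫ u in (0:ℝ)..σ', (∫ ξ in u..σ', Ke (σ', ξ) * Fe (ξ, u)) * We (u, τ))
          = ∫ z in (0:ℝ)..σ', ∫ u in z..σ', Ke (σ', u) * Fe (u, z) * We (z, τ) := by
        apply intervalIntegral.integral_congr
        intro z _
        show (∫ ξ in z..σ', Ke (σ', ξ) * Fe (ξ, z)) * We (z, τ)
            = ∫ u in z..σ', Ke (σ', u) * Fe (u, z) * We (z, τ)
        rw [← intervalIntegral.integral_mul_const]
      rw [hL, hR, hswap]
    -- boundary condition for the kernel
    have hbc : Ke (σ', 0) = (∫ u in (0:ℝ)..σ', Ke (σ', u) * Ge u) - Ge σ' := by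
      have h1 := hk_bc σ' (Set.mem_Icc.mpr ⟨hσ0.le, hσ1.le⟩)
      have e0 : Ke (σ', 0) = k σ' 0 := hKeeq (σ', 0)
        ⟨le_refl 0, hσ0.le, show σ' ≤ 1 from hσ1.le⟩
      have e1 : (∫ u in (0:ℝ)..σ', Ke (σ', u) * Ge u) = ∫ y in (0:ℝ)..σ', k σ' y * G y := by
        apply intervalIntegral.integral_congr
        intro y hy
        rw [Set.uIcc_of_le hσ0.le] at hy
        have eK : Ke (σ', y) = k σ' y := hKeeq (σ', y)
          ⟨hy.1, hy.2, show σ' ≤ 1 from hσ1.le⟩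
        have eG : Ge y = G y := hGeeq y ⟨hy.1, by linarith [hy.2]⟩
        show Ke (σ', y) * Ge y = k σ' y * G y
        rw [eK, eG]
      have e2 : Ge σ' = G σ' := hGeeq σ' ⟨hσ0.le, hσ1.le⟩
      rw [e0, e1, e2, h1]
    have hQσ : Q σ' τ = Ge σ' * c0 + ∫ u in (0:ℝ)..σ', Fe (σ', u) * We (u, τ) := rfl
    rw [hstep1, hstep2, hfub, hbc, hQσ]
    ring
  -- main identity : We = Psi for t ≥ 1
  have key1 : ∀ σ ∈ Set.Icc (0:ℝ) 1, ∀ t ≥ (1:ℝ), We (σ, t) = Psi σ t := by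
    intro σ hσ t ht
    set b : ℝ := 1 - σ with hb
    have hb0 : (0:ℝ) ≤ b := by rw [hb]; linarith [hσ.2]
    have hline : Continuous fun s : ℝ => ((σ + s, t - s) : ℝ × ℝ) :=
      (continuous_const.add continuous_id).prodMk (continuous_const.sub continuous_id)
    have hgcont : ContinuousOn (fun s => We (σ + s, t - s) - Psi (σ + s) (t - s))
        (Set.Icc 0 b) :=
      ((hWec.comp hline).sub (hPsic.comp hline)).continuousOn
    have hderiv : ∀ s ∈ Set.Ioo (0:ℝ) b,
        HasDerivWithinAt (fun r => We (σ + r, t - r) - Psi (σ + r) (t - r)) ((0:ℝ) )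
          (Set.Ioi s) s := by
      intro s hs
      have hσ's : 0 < σ + s := by linarith [hσ.1, hs.1]
      have hσ's1 : σ + s < 1 := by
        have := hs.2; rw [hb] at this; linarith
      have hτs : 0 < t - s := by
        have := hs.2; rw [hb] at this; linarith [hσ.1]
      have hpart1 : HasDerivAt (fun r => We (σ + r, t - r)) (-(Q (σ + s) (t - s))) s :=
        hWline σ t s hσ's hσ's1 hτs
      have hchar' : ∀ σ0 s1 : ℝ, 0 ≤ σ0 → 0 ≤ s1 → σ0 + s1 ≤ 1 → s1 ≤ t - s →
          We (σ0 + s1, (t - s) - s1) = We (σ0, t - s)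
            - ∫ r in (0:ℝ)..s1, Q (σ0 + r) ((t - s) - r) :=
        fun σ0 s1 a1 a2 a3 a4 => charId σ0 (t - s) s1 a1 a2 a3 a4
      have hlip' : ∀ h u : ℝ, 0 < h → h ≤ 1 - (σ + s) → 0 ≤ u → u ≤ σ + s →
          |Ke (σ + s + h, u + h) - Ke (σ + s, u)| ≤ CK * h := by
        intro h u hh1 hh2 hu0 huσ
        have hmem1 : ((σ + s + h, u + h) : ℝ × ℝ)
            ∈ {p : ℝ × ℝ | 0 ≤ p.2 ∧ p.2 ≤ p.1 ∧ p.1 ≤ 1} :=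
          ⟨by simp; linarith, by simp; linarith, by simp; linarith⟩
        have hmem2 : ((σ + s, u) : ℝ × ℝ)
            ∈ {p : ℝ × ℝ | 0 ≤ p.2 ∧ p.2 ≤ p.1 ∧ p.1 ≤ 1} :=
          ⟨by simp; linarith, by simp; linarith, by simp; linarith⟩
        have := hKlip _ hmem1 _ hmem2
        have hdist : dist ((σ + s + h, u + h) : ℝ × ℝ) ((σ + s, u) : ℝ × ℝ) = h := by
          rw [Prod.dist_eq, Real.dist_eq, Real.dist_eq]
          rw [show σ + s + h - (σ + s) = h by ring, show u + h - u = h by ring,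
            abs_of_pos hh1, max_self]
        rw [hdist] at this
        exact this
      have hLd : ∀ u ∈ Set.Ioo (0:ℝ) (σ + s),
          HasDerivAt (fun h => Ke (σ + s + h, u + h))
            (deriv (fun s' => k s' u) (σ + s) + deriv (fun y => k (σ + s) y) u) 0 :=
        fun u hu => hLder (σ + s) ⟨hσ's, hσ's1⟩ u hu
      have htend := aux_DPsi Ke We Q
        (fun u => deriv (fun s' => k s' u) (σ + s) + deriv (fun y => k (σ + s) y) u)
        hKec hWec hQc hσ's hσ's1 hτs hchar' hCK0 hlip' hLd
      have hpart2 : HasDerivWithinAt (fun r => Psi (σ + r) (t - r))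
          (Ke (σ + s, 0) * We (0, t - s) +
            ∫ u in (0:ℝ)..(σ + s),
              ((deriv (fun s' => k s' u) (σ + s) + deriv (fun y => k (σ + s) y) u) * We (u, t - s)
                - Ke (σ + s, u) * Q u (t - s))) (Set.Ioi s) s := by
        apply aux_hasDerivWithinAt_of_tendsto (Φ := Psi)
        exact htend
      have hcomb := hpart1.hasDerivWithinAt.sub hpart2
      have hzero : -(Q (σ + s) (t - s)) - (Ke (σ + s, 0) * We (0, t - s) +
          ∫ u in (0:ℝ)..(σ + s),
            ((deriv (fun s' => k s' u) (σ + s) + deriv (fun y => k (σ + s) y) u) * We (u, t - s)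
              - Ke (σ + s, u) * Q u (t - s))) = 0 := by
        rw [hDQ (σ + s) (t - s) hσ's hσ's1 hτs]
        ring
      rw [hzero] at hcomb
      exact hcomb
    have hftc := ftc_right (f := fun s => We (σ + s, t - s) - Psi (σ + s) (t - s))
      (g := fun _ => (0:ℝ)) hb0 hgcont hderiv continuousOn_const
    have hftc' : We (σ + b, t - b) - Psi (σ + b) (t - b)
        = (We (σ + 0, t - 0) - Psi (σ + 0) (t - 0)) + ∫ _x in (0:ℝ)..b, (0:ℝ) := hftc
    rw [intervalIntegral.integral_zero] at hftc'
    have e1 : σ + b = 1 := by rw [hb]; ring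
    rw [e1] at hftc'
    have ht' : (0:ℝ) ≤ t - b := by rw [hb]; linarith [hσ.1]
    have hbdry : We (1, t - b) = Psi 1 (t - b) := by
      have h1 := hw_bc (t - b) ht'
      have e2 : We (1, t - b) = w 1 (t - b) := hWeeq _
        (Set.mk_mem_prod (Set.mem_Icc.mpr ⟨zero_le_one, le_refl 1⟩) ht')
      have e3 : Psi 1 (t - b) = ∫ y in (0:ℝ)..1, k 1 y * w y (t - b) := by
        apply intervalIntegral.integral_congr
        intro y hy
        rw [Set.uIcc_of_le zero_le_one] at hy
        have eK : Ke (1, y) = k 1 y := hKeeq (1, y) ⟨hy.1, hy.2, le_refl 1⟩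
        have eW : We (y, t - b) = w y (t - b) := hWeeq (y, t - b)
          (Set.mk_mem_prod (Set.mem_Icc.mpr ⟨hy.1, hy.2⟩) ht')
        show Ke (1, y) * We (y, t - b) = k 1 y * w y (t - b)
        rw [eK, eW]
      rw [e2, e3, ← h1]
    rw [hbdry] at hftc'
    simp only [add_zero, sub_zero, sub_self] at hftc'
    linarith [hftc']
  -- Gronwall/Volterra step
  intro σ hσ t ht
  obtain ⟨MK2, hMK2⟩ := (isCompact_Icc.prod isCompact_Icc).exists_bound_of_continuousOn
    (hKec.continuousOn (s := Set.Icc (0:ℝ) 1 ×ˢ Set.Icc (0:ℝ) 1))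
  have hMK2' : (0:ℝ) ≤ MK2 := le_trans (norm_nonneg _) (hMK2 (0, 0)
    (Set.mk_mem_prod (Set.mem_Icc.mpr ⟨le_refl 0, zero_le_one⟩)
      (Set.mem_Icc.mpr ⟨le_refl 0, zero_le_one⟩)))
  set KK : ℝ := MK2 + 1 with hKK
  have hKKpos : (0:ℝ) < KK := by rw [hKK]; linarith
  set f : ℝ → ℝ := fun x => ∫ y in (0:ℝ)..x, |We (y, t)| with hfdef
  have habs : Continuous fun y : ℝ => |We (y, t)| :=
    (hWec.comp (continuous_id.prodMk continuous_const)).abs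
  have hfcont : Continuous f :=
    intervalIntegral.continuous_primitive (fun a b => habs.intervalIntegrable a b) 0
  have hfderiv : ∀ x ∈ Set.Ico (0:ℝ) 1, HasDerivWithinAt f (|We (x, t)|) (Set.Ici x) x :=
    fun x _ => (intervalIntegral.integral_hasDerivAt_right (habs.intervalIntegrable _ _)
      ⟨Set.univ, Filter.univ_mem, habs.aestronglyMeasurable.restrict⟩
      habs.continuousAt).hasDerivWithinAt
  have hfnonneg : ∀ x ∈ Set.Icc (0:ℝ) 1, 0 ≤ f x :=
    fun x hx => intervalIntegral.integral_nonneg hx.1 (fun y _ => abs_nonneg _)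
  have ht0 : (0:ℝ) ≤ t := by linarith
  have hWbound : ∀ x ∈ Set.Icc (0:ℝ) 1, |We (x, t)| ≤ KK * f x := by
    intro x hx
    rw [key1 x hx t ht]
    have h1 : |Psi x t| ≤ ∫ y in (0:ℝ)..x, |Ke (x, y) * We (y, t)| :=
      intervalIntegral.abs_integral_le_integral_abs hx.1
    have h2 : (∫ y in (0:ℝ)..x, |Ke (x, y) * We (y, t)|)
        ≤ ∫ y in (0:ℝ)..x, MK2 * |We (y, t)| := by
      apply intervalIntegral.integral_mono_on hx.1
        (((hKec.comp (continuous_const.prodMk continuous_id)).mul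
          (hWec.comp (continuous_id.prodMk continuous_const))).abs.intervalIntegrable _ _)
        ((continuous_const.mul habs).intervalIntegrable _ _)
      intro y hy
      show |Ke (x, y) * We (y, t)| ≤ MK2 * |We (y, t)|
      rw [abs_mul]
      apply mul_le_mul_of_nonneg_right ?_ (abs_nonneg _)
      exact hMK2 (x, y) (Set.mk_mem_prod (Set.mem_Icc.mpr ⟨hx.1, hx.2⟩)
        (Set.mem_Icc.mpr ⟨hy.1, le_trans hy.2 hx.2⟩))
    have h3 : (∫ y in (0:ℝ)..x, MK2 * |We (y, t)|) = MK2 * f x :=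
      intervalIntegral.integral_const_mul _ _
    calc |Psi x t| ≤ MK2 * f x := by rw [← h3]; exact le_trans h1 h2
      _ ≤ KK * f x := by
          apply mul_le_mul_of_nonneg_right ?_ (hfnonneg x hx)
          rw [hKK]; linarith
  have hgr : ∀ ε > (0:ℝ), ∀ x ∈ Set.Icc (0:ℝ) 1, ‖f x‖ ≤ gronwallBound 0 KK ε (x - 0) := by
    intro ε hε
    apply norm_le_gronwallBound_of_norm_deriv_right_le hfcont.continuousOn hfderiv
    · have : f 0 = 0 := intervalIntegral.integral_same
      rw [this, norm_zero]
    · intro x hx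
      rw [Real.norm_eq_abs, abs_abs, Real.norm_eq_abs,
        abs_of_nonneg (hfnonneg x ⟨hx.1, hx.2.le⟩)]
      have := hWbound x ⟨hx.1, hx.2.le⟩
      linarith
  have hf0 : ∀ x ∈ Set.Icc (0:ℝ) 1, f x ≤ 0 := by
    intro x hx
    have htnd : Filter.Tendsto (fun ε => gronwallBound 0 KK ε (x - 0))
        (nhdsWithin 0 (Set.Ioi 0)) (nhds (gronwallBound 0 KK 0 (x - 0))) :=
      ((gronwallBound_continuous_ε 0 KK (x - 0)).tendsto 0).mono_left nhdsWithin_le_nhds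
    rw [gronwallBound_ε0, zero_mul] at htnd
    have hev : ∀ᶠ ε in nhdsWithin 0 (Set.Ioi 0), f x ≤ gronwallBound 0 KK ε (x - 0) := by
      filter_upwards [self_mem_nhdsWithin] with ε hε
      have := hgr ε hε x hx
      rwa [Real.norm_eq_abs, abs_of_nonneg (hfnonneg x hx)] at this
    exact ge_of_tendsto htnd hev
  have hfzero : f σ = 0 := le_antisymm (hf0 σ hσ) (hfnonneg σ hσ)
  have hWσb := hWbound σ hσ
  rw [hfzero, mul_zero] at hWσb
  have hWσ : We (σ, t) = w σ t := hWeeq (σ, t) (Set.mk_mem_prod hσ ht0)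
  rw [hWσ] at hWσb
  exact abs_eq_zero.mp (le_antisymm hWσb (abs_nonneg _))
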